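/- Let ε > 0 be a real number. Then there exists a constant C > 0 (depending only on ε) such that for every y ≥ 0 one has ∫_{-y}^{∞} ⟨x⟩^{-ε} ⟨x+y⟩^{-1/2} (x+y)^{-1/2} dx ≤ C. -/

import Mathlib

open MeasureTheory Real

/-- Japanese bracket `⟨y⟩ = 1 + |y|`. -/
noncomputable def jb (y : ℝ) : ℝ := 1 + |y|

/-!
Write `w t = ⟨t⟩^{-1/2} t^{-1/2}`, so that the integrand is `⟨x⟩^{-ε} w (x + y)`. Young's
inequality `ab ≤ a^p/p + b^q/q`, with `p > max 2 (1/ε)` and `q` its conjugate exponent, bounds it by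
`⟨x⟩^{-εp}/p + w(x + y)^q/q`. The first term is integrable over all of `ℝ` because `εp > 1`; the
integral of the second over `x > -y` is `∫_0^∞ w^q` by translation, which is finite because
`w^q ≤ t^{-q/2}` near `0` and `w^q ≤ t^{-q}` near `∞`, with `1 < q < 2`. Neither bound depends on `y`.
-/

open Set

lemma jb_pos (x : ℝ) : 0 < jb x := by
  unfold jb; positivity

lemma one_le_jb (x : ℝ) : 1 ≤ jb x := le_add_of_nonneg_right (abs_nonneg x)

lemma self_le_jb (x : ℝ) : x ≤ jb x := by
  unfold jb; linarith [le_abs_self x]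

lemma integrable_jb_rpow_neg {r : ℝ} (hr : 1 < r) : Integrable fun x : ℝ => jb x ^ (-r) := by
  simpa [jb, Real.norm_eq_abs] using
    integrable_one_add_norm (E := ℝ) (μ := volume) (r := r) (by simpa using hr)

lemma setIntegral_Ioi_comp_add_right {E : Type*} [NormedAddCommGroup E] [NormedSpace ℝ E]
    (f : ℝ → E) (a y : ℝ) : ∫ x in Ioi (a - y), f (x + y) = ∫ t in Ioi a, f t := by
  have h := (measurePreserving_add_right volume y).setIntegral_preimage_emb
    (measurableEmbedding_addRight y) f (Ioi a)
  rwa [preimage_add_const_Ioi] at h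

lemma MeasureTheory.IntegrableOn.comp_add_right_Ioi {E : Type*} [NormedAddCommGroup E]
    {f : ℝ → E} {a : ℝ} (hf : IntegrableOn f (Ioi a)) (y : ℝ) :
    IntegrableOn (fun x => f (x + y)) (Ioi (a - y)) := by
  have h := (measurePreserving_add_right volume y).integrableOn_comp_preimage
    (measurableEmbedding_addRight y) (f := f) (s := Ioi a)
  rw [preimage_add_const_Ioi] at h
  exact h.2 hf

lemma integrableOn_Ioi_zero_of_le_rpow {f : ℝ → ℝ} {a b : ℝ} (ha : -1 < a) (hb : b < -1)
    (hf : AEStronglyMeasurable f (volume.restrict (Ioi 0)))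
    (h_small : ∀ t ∈ Ioc 0 1, ‖f t‖ ≤ t ^ a) (h_large : ∀ t, 1 < t → ‖f t‖ ≤ t ^ b) :
    IntegrableOn f (Ioi 0) := by
  rw [← Ioc_union_Ioi_eq_Ioi zero_le_one]
  refine IntegrableOn.union ?_ ?_
  · have hdom : IntegrableOn (fun t : ℝ => t ^ a) (Ioc 0 1) :=
      (intervalIntegrable_iff_integrableOn_Ioc_of_le zero_le_one).1
        (intervalIntegral.intervalIntegrable_rpow' ha)
    refine hdom.integrable.mono' (hf.mono_set Ioc_subset_Ioi_self) ?_
    filter_upwards [ae_restrict_mem measurableSet_Ioc] with t ht using h_small t ht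
  · refine (integrableOn_Ioi_rpow_of_lt hb zero_lt_one).integrable.mono'
      (hf.mono_set (Ioi_subset_Ioi zero_le_one)) ?_
    filter_upwards [ae_restrict_mem measurableSet_Ioi] with t ht using h_large t ht

lemma integrableOn_Ioi_jb_rpow_mul_rpow_rpow {q : ℝ} (hq₁ : 1 < q) (hq₂ : q < 2) :
    IntegrableOn (fun t : ℝ => (jb t ^ (-(1 / 2 : ℝ)) * t ^ (-(1 / 2 : ℝ))) ^ q) (Ioi 0) := by
  have hmeas : Measurable fun t : ℝ => (jb t ^ (-(1 / 2 : ℝ)) * t ^ (-(1 / 2 : ℝ))) ^ q := by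
    unfold jb; fun_prop
  have hbound : ∀ {t c : ℝ}, 0 < t → jb t ^ (-(1 / 2 : ℝ)) * t ^ (-(1 / 2 : ℝ)) ≤ t ^ c →
      ‖(jb t ^ (-(1 / 2 : ℝ)) * t ^ (-(1 / 2 : ℝ))) ^ q‖ ≤ t ^ (c * q) := by
    intro t c ht h
    have h0 : 0 ≤ jb t ^ (-(1 / 2 : ℝ)) * t ^ (-(1 / 2 : ℝ)) := by
      have := jb_pos t; positivity
    rw [norm_of_nonneg (by positivity), rpow_mul ht.le]
    exact rpow_le_rpow h0 h (by linarith)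
  refine integrableOn_Ioi_zero_of_le_rpow (a := -(1 / 2) * q) (b := -1 * q) (by linarith)
    (by linarith) hmeas.aestronglyMeasurable (fun t ht => hbound ht.1 ?_)
    (fun t ht => hbound (by linarith) ?_)
  · exact mul_le_of_le_one_left (rpow_nonneg ht.1.le _)
      (rpow_le_one_of_one_le_of_nonpos (one_le_jb t) (by norm_num))
  · have ht0 : 0 < t := by linarith
    have h : jb t ^ (-(1 / 2 : ℝ)) ≤ t ^ (-(1 / 2 : ℝ)) :=
      rpow_le_rpow_of_nonpos ht0 (self_le_jb t) (by norm_num)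
    calc jb t ^ (-(1 / 2 : ℝ)) * t ^ (-(1 / 2 : ℝ))
        ≤ t ^ (-(1 / 2 : ℝ)) * t ^ (-(1 / 2 : ℝ)) := by gcongr
      _ = t ^ (-1 : ℝ) := by rw [← rpow_add ht0]; norm_num

lemma rpow_neg_mul_le_young {a b ε p q : ℝ} (ha : 0 ≤ a) (hb : 0 ≤ b)
    (hpq : p.HolderConjugate q) : a ^ (-ε) * b ≤ a ^ (-(ε * p)) / p + b ^ q / q := by
  simpa only [← rpow_mul ha, neg_mul] using
    young_inequality_of_nonneg (rpow_nonneg ha (-ε)) hb hpq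

lemma setIntegral_Ioi_jb_rpow_mul_le {ε p q : ℝ} (hpq : p.HolderConjugate q) (hεp : 1 < ε * p)
    (hq : q < 2) (y : ℝ) :
    ∫ x in Ioi (-y), jb x ^ (-ε) * jb (x + y) ^ (-(1 / 2 : ℝ)) * (x + y) ^ (-(1 / 2 : ℝ)) ≤
      (∫ x, jb x ^ (-(ε * p))) / p +
        (∫ t in Ioi 0, (jb t ^ (-(1 / 2 : ℝ)) * t ^ (-(1 / 2 : ℝ))) ^ q) / q := by
  have hA := integrable_jb_rpow_neg hεp
  have hB := (integrableOn_Ioi_jb_rpow_mul_rpow_rpow hpq.symm.lt hq).comp_add_right_Ioi y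
  rw [zero_sub] at hB
  have hweight : ∀ x ∈ Ioi (-y), 0 ≤ jb (x + y) ^ (-(1 / 2 : ℝ)) * (x + y) ^ (-(1 / 2 : ℝ)) :=
    fun x hx => mul_nonneg (rpow_nonneg (jb_pos _).le _)
      (rpow_nonneg (neg_lt_iff_pos_add.1 hx).le _)
  calc ∫ x in Ioi (-y), jb x ^ (-ε) * jb (x + y) ^ (-(1 / 2 : ℝ)) * (x + y) ^ (-(1 / 2 : ℝ))
      ≤ ∫ x in Ioi (-y), (jb x ^ (-(ε * p)) / p +
          (jb (x + y) ^ (-(1 / 2 : ℝ)) * (x + y) ^ (-(1 / 2 : ℝ))) ^ q / q) := by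
        refine integral_mono_of_nonneg ?_ ((hA.integrableOn.div_const _).add (hB.div_const _)) ?_
        · filter_upwards [ae_restrict_mem measurableSet_Ioi] with x hx
          rw [mul_assoc]
          exact mul_nonneg (rpow_nonneg (jb_pos x).le _) (hweight x hx)
        · filter_upwards [ae_restrict_mem measurableSet_Ioi] with x hx
          rw [mul_assoc]
          exact rpow_neg_mul_le_young (jb_pos x).le (hweight x hx) hpq
    _ = (∫ x in Ioi (-y), jb x ^ (-(ε * p))) / p +
          (∫ t in Ioi 0, (jb t ^ (-(1 / 2 : ℝ)) * t ^ (-(1 / 2 : ℝ))) ^ q) / q := by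
        rw [integral_add (hA.integrableOn.div_const _) (hB.div_const _), integral_div,
          integral_div, ← zero_sub,
          setIntegral_Ioi_comp_add_right fun t => (jb t ^ (-(1 / 2 : ℝ)) * t ^ (-(1 / 2 : ℝ))) ^ q]
    _ ≤ _ := by
        gcongr ?_ / _ + _
        · exact hpq.pos.le
        · exact setIntegral_le_integral hA (.of_forall fun x => rpow_nonneg (jb_pos x).le _)

lemma exists_holderConjugate_one_lt_mul_and_lt_two {ε : ℝ} (hε : 0 < ε) :
    ∃ p q : ℝ, p.HolderConjugate q ∧ 1 < ε * p ∧ q < 2 := by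
  have hp : 2 < 2 + ε⁻¹ := lt_add_of_pos_right 2 (inv_pos.2 hε)
  refine ⟨2 + ε⁻¹, conjExponent (2 + ε⁻¹), .conjExponent (by linarith), ?_, ?_⟩
  · rw [mul_add, mul_inv_cancel₀ hε.ne']
    linarith
  · rw [conjExponent, div_lt_iff₀ (by linarith)]
    linarith

/-- For `ε > 0`, `∫_{-y}^∞ ⟨x⟩^{-ε} ⟨x+y⟩^{-1/2} (x+y)^{-1/2} dx` is bounded
uniformly in `y ≥ 0`. -/
theorem integral_shift_bounded (ε : ℝ) (hε : 0 < ε) :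
    ∃ C > 0, ∀ y : ℝ, 0 ≤ y →
      (∫ x in Set.Ioi (-y),
          jb x ^ (-ε) * jb (x + y) ^ (-(1 / 2 : ℝ)) * (x + y) ^ (-(1 / 2 : ℝ))) ≤ C := by
  obtain ⟨p, q, hpq, hεp, hq⟩ := exists_holderConjugate_one_lt_mul_and_lt_two hε
  exact ⟨max _ 1, lt_max_of_lt_right one_pos,
    fun y _ => (setIntegral_Ioi_jb_rpow_mul_le hpq hεp hq y).trans (le_max_left _ _)⟩
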